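/- In a tree with at least one heavy vertex, the heavy vertices induce a connected subgraph. -/

import Mathlib

/-- `Gnot G v u` is the set `G_{v↛u}` of vertices `w` such that `u` does not lie on the
unique path from `v` to `w` (expressed via distances). -/
noncomputable def Gnot {V : Type*} [Fintype V] [DecidableEq V]
    (G : SimpleGraph V) (v u : V) : Finset V :=
  Finset.univ \ Finset.univ.filter (fun w => G.dist v u + G.dist u w = G.dist v w)

/-- A vertex is light (w.r.t. threshold `k`) if it is light against some neighbor,
i.e. `|G_{v↛u}| ≤ k` for some neighbor `u`; heavy means not light. -/
def Light {V : Type*} [Fintype V] [DecidableEq V]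
    (G : SimpleGraph V) (k : ℕ) (v : V) : Prop :=
  ∃ u : V, G.Adj v u ∧ (Gnot G v u).card ≤ k

/-!
If `v` is light against `u` and `n ≠ u` is a neighbour of `v`, then `G_{n↛v} ⊆ G_{v↛u}`,
because in a tree `v` has only one neighbour closer to any given vertex. Walking from `v` into
`G_{v↛u}` therefore shows that every vertex `x ≠ v` of `G_{v↛u}` is light. A light vertex on
the path between two heavy vertices would be light against a neighbour pointing away from one
of the two ends, and that end would then be light.
-/

namespace SimpleGraph

variable {V : Type*} {G : SimpleGraph V}

lemma Reachable.exists_adj_dist_eq_add_one {u v : V} (h : G.Reachable u v) (hne : u ≠ v) :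
    ∃ w, G.Adj u w ∧ G.dist u v = G.dist w v + 1 := by
  obtain ⟨p, hp⟩ := h.exists_walk_length_eq_dist
  cases p with
  | nil => exact absurd rfl hne
  | cons hadj q =>
    refine ⟨_, hadj, ?_⟩
    have hq := dist_le q
    have htri := hadj.reachable.dist_triangle_left v
    rw [Walk.length_cons] at hp
    rw [dist_eq_one_iff_adj.mpr hadj] at htri
    omega

lemma IsAcyclic.eq_of_adj_of_dist_eq_add_one (hG : G.IsAcyclic) {v a b w : V}
    (ha : G.Adj v a) (hb : G.Adj v b) (hda : G.dist w v = G.dist w a + 1)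
    (hdb : G.dist w v = G.dist w b + 1) : a = b := by
  classical
  have hwv : G.Reachable w v := Reachable.of_dist_ne_zero (by omega)
  obtain ⟨P, hP, -⟩ := hwv.exists_path_of_dist
  have mem_support : ∀ c, G.Adj v c → G.dist w v = G.dist w c + 1 → c ∈ P.support := by
    intro c hc hdc
    obtain ⟨q, hq, hql⟩ := (hwv.trans hc.reachable).exists_path_of_dist
    refine hG.mem_support_of_ne_mem_support_of_adj_of_isPath hP hq hc fun hv => ?_
    have := (dist_le (q.takeUntil v hv)).trans (q.length_takeUntil_le_length hv)
    omega
  rw [hG.eq_penultimate_of_adj_end hP ha (mem_support a ha hda),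
    hG.eq_penultimate_of_adj_end hP hb (mem_support b hb hdb)]

end SimpleGraph

open SimpleGraph Finset

section Tree

variable {V : Type*} [Fintype V] [DecidableEq V] {G : SimpleGraph V}

lemma mem_Gnot_iff (hG : G.IsTree) {v u : V} (hvu : G.Adj v u) {w : V} :
    w ∈ Gnot G v u ↔ G.dist u w = G.dist v w + 1 := by
  have hsplit := hG.dist_eq_dist_add_one_of_adj w hvu
  rw [dist_comm (u := w), dist_comm (u := w)] at hsplit
  simp only [Gnot, mem_sdiff, mem_univ, mem_filter, true_and, dist_eq_one_iff_adj.mpr hvu]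
  omega

lemma Gnot_subset_Gnot (hG : G.IsTree) {n v u : V} (hvu : G.Adj v u) (hvn : G.Adj v n)
    (hnu : n ≠ u) : Gnot G n v ⊆ Gnot G v u := by
  intro w hw
  rw [mem_Gnot_iff hG hvn.symm] at hw
  rw [mem_Gnot_iff hG hvu]
  rcases hG.dist_eq_dist_add_one_of_adj w hvu with h | h
  · refine absurd (hG.isAcyclic.eq_of_adj_of_dist_eq_add_one hvn hvu ?_ h) hnu
    rw [dist_comm (u := w), hw, dist_comm]
  · rwa [dist_comm (u := w), dist_comm (u := w)] at h

lemma light_of_mem_Gnot (hG : G.IsTree) {k : ℕ} {v u : V} (hvu : G.Adj v u)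
    (hcard : #(Gnot G v u) ≤ k) {x : V} (hx : x ∈ Gnot G v u) (hxv : x ≠ v) : Light G k x := by
  induction hd : G.dist v x generalizing v u with
  | zero => exact absurd ((hG.connected.dist_eq_zero_iff).mp hd).symm hxv
  | succ d ih =>
    obtain ⟨n, hvn, hdn⟩ := (hG.connected v x).exists_adj_dist_eq_add_one hxv.symm
    have hnu : n ≠ u := by
      rintro rfl
      rw [mem_Gnot_iff hG hvu] at hx
      omega
    have hcard' := (card_le_card (Gnot_subset_Gnot hG hvu hvn hnu)).trans hcard
    by_cases hxn : x = n
    · exact hxn ▸ ⟨v, hvn.symm, hcard'⟩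
    · exact ih hvn.symm hcard' ((mem_Gnot_iff hG hvn.symm).mpr hdn) hxn (by omega)

lemma not_light_of_adj_of_dist_eq_add_one (hG : G.IsTree) {k : ℕ} {a b y : V}
    (ha : ¬ Light G k a) (hb : ¬ Light G k b) (hay : G.Adj a y)
    (hd : G.dist a b = G.dist y b + 1) : ¬ Light G k y := by
  rintro ⟨u, hyu, hcard⟩
  by_cases hua : u = a
  · subst hua
    by_cases hby : b = y
    · exact hb (hby ▸ ⟨u, hyu, hcard⟩)
    · exact hb (light_of_mem_Gnot hG hyu hcard ((mem_Gnot_iff hG hyu).mpr hd) hby)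
  · have hau : a ∈ Gnot G y u := by
      rw [mem_Gnot_iff hG hyu]
      rcases hG.dist_eq_dist_add_one_of_adj a hyu with h | h
      · rw [dist_eq_one_iff_adj.mpr hay] at h
        exact absurd ((hG.connected.dist_eq_zero_iff).mp (by omega)) (Ne.symm hua)
      · rwa [dist_comm (u := a), dist_comm (u := a)] at h
    exact ha (light_of_mem_Gnot hG hyu hcard hau hay.ne)

lemma reachable_induce_not_light (hG : G.IsTree) (k : ℕ) {a b : V} (ha : ¬ Light G k a)
    (hb : ¬ Light G k b) :
    (G.induce {v | ¬ Light G k v}).Reachable ⟨a, ha⟩ ⟨b, hb⟩ := by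
  induction hd : G.dist a b generalizing a with
  | zero =>
    obtain rfl := (hG.connected.dist_eq_zero_iff).mp hd
    rfl
  | succ d ih =>
    obtain ⟨y, hay, hdy⟩ := (hG.connected a b).exists_adj_dist_eq_add_one (by
      rintro rfl
      simp at hd)
    have hy := not_light_of_adj_of_dist_eq_add_one hG ha hb hay hdy
    have hstep : (G.induce {v | ¬ Light G k v}).Adj ⟨a, ha⟩ ⟨y, hy⟩ := by simpa using hay
    exact hstep.reachable.trans (ih hy (by omega))

end Tree

theorem stmt_6_general {V : Type*} [Fintype V] [DecidableEq V]
    (G : SimpleGraph V) (hG : G.IsTree) (k : ℕ)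
    (hheavy : ∃ h : V, ¬ Light G k h) :
    (G.induce {v : V | ¬ Light G k v}).Connected := by
  obtain ⟨h, hh⟩ := hheavy
  have : Nonempty {v : V | ¬ Light G k v} := ⟨⟨h, hh⟩⟩
  exact ⟨fun ⟨a, ha⟩ ⟨b, hb⟩ => reachable_induce_not_light hG k ha hb⟩

/-- In a tree with at least one heavy vertex, the heavy vertices induce a connected
subgraph. -/
theorem stmt_6 {V : Type*} [Fintype V] [DecidableEq V]
    (G : SimpleGraph V) (hG : G.IsTree) (k : ℕ) (hk : 1 ≤ k)
    (hheavy : ∃ h : V, ¬ Light G k h) :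
    (G.induce {v : V | ¬ Light G k v}).Connected :=
  stmt_6_general G hG k hheavy
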